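/- arXiv:2102.10197 — 8 statements merged into one kernel-verified Lean document; each statement's English description precedes it below -/
import Mathlib

section
/- For all integers n ≥ 1 and 0 ≤ k ≤ n, the local Lagrangian surgery trace J : ℝ^{n+1} → ℂ^n × ℂ is injective, its Fréchet derivative DJ_x is injective at every point x ∈ ℝ^{n+1}, and its image distribution is isotropic for the standard symplectic form: for every x ∈ ℝ^{n+1} and all v, w ∈ ℝ^{n+1} one has ω(DJ_x v, DJ_x w) = 0, where ℂ^n × ℂ is identified with ℂ^{n+1} and ω is the standard symplectic form on ℂ^{n+1}. (That is, J parameterizes an embedded Lagrangian submanifold of ℂ^{n+1}.) -/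
open scoped BigOperators

/-- Standard symplectic form on `ℂ^N`: `ω(u, v) = Im (∑ conj (u j) * v j)`. -/
noncomputable def stdSymp (N : ℕ) (u v : Fin N → ℂ) : ℝ :=
  (∑ j, (starRingEnd ℂ) (u j) * v j).im

/-- Standard symplectic form on `ℂ^n × ℂ`, identified with `ℂ^{n+1}` coordinatewise. -/
noncomputable def sympPC (n : ℕ) (u v : (Fin n → ℂ) × ℂ) : ℝ :=
  stdSymp n u.1 v.1 + ((starRingEnd ℂ) u.2 * v.2).im

/-- `σ_j = 1` for `1 ≤ j ≤ k`, `σ_j = −1` for `k < j ≤ n`; here `j : Fin n` denotes the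
coordinate index `j + 1 ∈ {1, …, n}`. -/
def sgn (n k : ℕ) (j : Fin n) : ℝ := if (j : ℕ) + 1 ≤ k then 1 else -1

/-- The local Lagrangian surgery trace `J : ℝ^{n+1} → ℂ^n × ℂ`,
`J(x) = ((x_j + 2i σ_j x_j x_0)_{j=1}^n, (x_0² + ∑ σ_j x_j²) − i x_0)`. -/
noncomputable def surgeryTrace (n k : ℕ) (x : Fin (n + 1) → ℝ) : (Fin n → ℂ) × ℂ :=
  (fun j => (x j.succ : ℂ) + 2 * Complex.I * (sgn n k j : ℂ) * (x j.succ : ℂ) * (x 0 : ℂ),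
   (((x 0) ^ 2 + ∑ j, sgn n k j * (x j.succ) ^ 2 : ℝ) : ℂ) - Complex.I * (x 0 : ℂ))

/-!
Reading off `Re` of the first `n` coordinates and `-Im` of the last one recovers `x` from `J x`;
since this recovery map is linear, it also recovers `v` from `DJ_x v`, so `J` is an injective
immersion. For isotropy, the `j`-th coordinate contributes `2 σ_j x_j (v_j w_0 - v_0 w_j)` to
`ω(DJ_x v, DJ_x w)`, and the last coordinate contributes `v_0 dg(w) - dg(v) w_0` for
`g = x_0² + ∑ σ_j x_j²`, which is exactly minus the sum of those terms.
-/

open Complex ComplexConjugate Finset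

theorem Complex.im_conj_mul (a b : ℂ) : (conj a * b).im = a.re * b.im - a.im * b.re := by
  rw [mul_im, conj_re, conj_im]
  ring

theorem fderiv_surgeryTrace_apply (n k : ℕ) (x v : Fin (n + 1) → ℝ) :
    fderiv ℝ (surgeryTrace n k) x v =
      (fun j => ⟨v j.succ, 2 * sgn n k j * (v j.succ * x 0 + x j.succ * v 0)⟩,
       ⟨2 * x 0 * v 0 + ∑ j, sgn n k j * (2 * x j.succ * v j.succ), -v 0⟩) := by
  have hr (i : Fin (n + 1)) := hasFDerivAt_apply (𝕜 := ℝ) i x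
  have hc (i : Fin (n + 1)) := ofRealCLM.hasFDerivAt.comp x (hr i)
  have hJ : HasFDerivAt (surgeryTrace n k) _ x :=
    (hasFDerivAt_pi.2 fun j => (hc j.succ).add
      (((hc j.succ).const_mul (2 * I * (sgn n k j : ℂ))).mul (hc 0))).prodMk
    ((ofRealCLM.hasFDerivAt.comp x (((hr 0).pow 2).add
      (HasFDerivAt.fun_sum fun j _ => ((hr j.succ).pow 2).const_mul (sgn n k j)))).sub
      ((hc 0).const_mul I))
  rw [hJ.fderiv]
  ext j <;> apply Complex.ext <;> simp
  ring

def surgeryTraceCoords (n : ℕ) (p : (Fin n → ℂ) × ℂ) : Fin (n + 1) → ℝ :=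
  Fin.cons (-p.2.im) fun j => (p.1 j).re

theorem leftInverse_surgeryTraceCoords (n k : ℕ) :
    Function.LeftInverse (surgeryTraceCoords n) (surgeryTrace n k) := by
  intro x
  ext i
  cases i using Fin.cases <;> simp [surgeryTraceCoords, surgeryTrace, sq]

theorem leftInverse_surgeryTraceCoords_fderiv (n k : ℕ) (x : Fin (n + 1) → ℝ) :
    Function.LeftInverse (surgeryTraceCoords n) (fderiv ℝ (surgeryTrace n k) x) := by
  intro v
  ext i
  cases i using Fin.cases <;> simp [surgeryTraceCoords, fderiv_surgeryTrace_apply]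

theorem sympPC_fderiv_surgeryTrace (n k : ℕ) (x v w : Fin (n + 1) → ℝ) :
    sympPC n (fderiv ℝ (surgeryTrace n k) x v) (fderiv ℝ (surgeryTrace n k) x w) = 0 := by
  have hfst (j : Fin n) : (conj ((fderiv ℝ (surgeryTrace n k) x v).1 j) *
      (fderiv ℝ (surgeryTrace n k) x w).1 j).im =
      2 * sgn n k j * x j.succ * (v j.succ * w 0 - v 0 * w j.succ) := by
    simp only [fderiv_surgeryTrace_apply, im_conj_mul]
    ring
  have hsnd : (conj (fderiv ℝ (surgeryTrace n k) x v).2 * (fderiv ℝ (surgeryTrace n k) x w).2).im =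
      v 0 * ∑ j, sgn n k j * (2 * x j.succ * w j.succ) -
        (∑ j, sgn n k j * (2 * x j.succ * v j.succ)) * w 0 := by
    simp only [fderiv_surgeryTrace_apply, im_conj_mul]
    ring
  rw [sympPC, stdSymp, im_sum, sum_congr rfl fun j _ => hfst j, hsnd, mul_sum, sum_mul,
    ← sum_sub_distrib, ← sum_add_distrib]
  exact sum_eq_zero fun j _ => by ring

theorem stmt0_general (n k : ℕ) :
    Function.Injective (surgeryTrace n k) ∧
    (∀ x : Fin (n + 1) → ℝ, Function.Injective (fderiv ℝ (surgeryTrace n k) x)) ∧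
    (∀ x v w : Fin (n + 1) → ℝ,
      sympPC n (fderiv ℝ (surgeryTrace n k) x v) (fderiv ℝ (surgeryTrace n k) x w) = 0) :=
  ⟨(leftInverse_surgeryTraceCoords n k).injective,
    fun x => (leftInverse_surgeryTraceCoords_fderiv n k x).injective,
    sympPC_fderiv_surgeryTrace n k⟩

/-- The local Lagrangian surgery trace is injective, is an immersion (its Fréchet derivative is
injective at every point), and its image distribution is isotropic for the standard symplectic
form on `ℂ^n × ℂ ≅ ℂ^{n+1}`: it parameterizes an embedded Lagrangian submanifold. -/
theorem stmt0 (n k : ℕ) (hn : 1 ≤ n) (hk : k ≤ n) :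
    Function.Injective (surgeryTrace n k) ∧
    (∀ x : Fin (n + 1) → ℝ, Function.Injective (fderiv ℝ (surgeryTrace n k) x)) ∧
    (∀ x v w : Fin (n + 1) → ℝ,
      sympPC n (fderiv ℝ (surgeryTrace n k) x v) (fderiv ℝ (surgeryTrace n k) x w) = 0) :=
  stmt0_general n k
end

section
/- For all integers n ≥ 1 and 0 ≤ k ≤ n and all x, y ∈ Q⁺ with x ≠ y: π(J(x)) = π(J(y)) if and only if {x, y} = {e, −e}, where e = (1, 0, …, 0) ∈ ℝ^{n+1}. (The positive slice of the local surgery trace has exactly one self-intersection, occurring at the two points (±1, 0, …, 0).) -/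
open scoped BigOperators

/-- The positive slice domain `Q⁺ = {x ∈ ℝ^{n+1} : x_0² + ∑ σ_j x_j² = 1}`. -/
def Qpos (n k : ℕ) : Set (Fin (n + 1) → ℝ) :=
  {x | (x 0) ^ 2 + ∑ j, sgn n k j * (x j.succ) ^ 2 = 1}

/-!
For the projection `π ∘ J` the real and imaginary parts of the `j`-th coordinate are `x_j` and
`2 σ_j x_j x_0`, so `π J x = π J y` says exactly that `x` and `y` have the same last `n`
coordinates `x_j` and the same products `x_j x_0`. If `x ≠ y`, then `x_0 ≠ y_0`, which forces every
`x_j = y_j` to vanish; on `Q⁺` this leaves only `x_0 = ±1`, i.e. `x, y ∈ {e, -e}`.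
-/

lemma Fin.eq_pi_single_zero_of_succ_eq_zero {n : ℕ} {M : Type*} [Zero M] {v : Fin (n + 1) → M}
    (hz : ∀ j : Fin n, v j.succ = 0) : v = Pi.single 0 (v 0) :=
  funext (Fin.cases (by simp) fun j => by simp [hz j])

namespace SurgeryTrace

variable {n k : ℕ} {x y : Fin (n + 1) → ℝ}

lemma sgn_ne_zero (n k : ℕ) (j : Fin n) : sgn n k j ≠ 0 := by
  unfold sgn
  split_ifs <;> norm_num

lemma fst_eq_iff :
    (surgeryTrace n k x).1 = (surgeryTrace n k y).1 ↔
      ∀ j : Fin n, x j.succ = y j.succ ∧ x j.succ * x 0 = y j.succ * y 0 := by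
  refine funext_iff.trans (forall_congr' fun j => ?_)
  have h2σ : 2 * sgn n k j ≠ 0 := mul_ne_zero two_ne_zero (sgn_ne_zero n k j)
  simp only [surgeryTrace, Complex.ext_iff, Complex.add_re, Complex.add_im, Complex.mul_re,
    Complex.mul_im, Complex.ofReal_re, Complex.ofReal_im, Complex.I_re, Complex.I_im,
    Complex.re_ofNat, Complex.im_ofNat]
  constructor
  · rintro ⟨hre, him⟩
    exact ⟨by linear_combination hre, mul_left_cancel₀ h2σ (by linear_combination him)⟩
  · rintro ⟨hs, hp⟩
    exact ⟨by linear_combination hs, by linear_combination 2 * sgn n k j * hp⟩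

lemma succ_eq_zero_of_fst_eq (h : (surgeryTrace n k x).1 = (surgeryTrace n k y).1)
    (hxy : x ≠ y) (j : Fin n) : x j.succ = 0 := by
  have hcoord := fst_eq_iff.mp h
  have h0 : x 0 ≠ y 0 := fun h0 => hxy (funext (Fin.cases h0 fun j => (hcoord j).1))
  obtain ⟨hs, hp⟩ := hcoord j
  have : x j.succ * (x 0 - y 0) = 0 := by linear_combination hp - y 0 * hs
  exact (mul_eq_zero.mp this).resolve_right (sub_ne_zero.mpr h0)

lemma eq_single_zero_or_eq_neg_of_mem_Qpos (hx : x ∈ Qpos n k) (hz : ∀ j : Fin n, x j.succ = 0) :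
    x = Pi.single 0 1 ∨ x = -Pi.single 0 1 := by
  have hsq : x 0 ^ 2 = 1 := by simpa [Qpos, hz] using hx
  rw [Fin.eq_pi_single_zero_of_succ_eq_zero hz, ← Pi.single_neg]
  rcases sq_eq_one_iff.mp hsq with h | h <;> simp [h]

lemma succ_eq_zero_of_mem_pair
    (hx : x ∈ ({Pi.single 0 1, -Pi.single 0 1} : Set (Fin (n + 1) → ℝ))) (j : Fin n) :
    x j.succ = 0 := by
  rcases hx with rfl | rfl <;> simp

end SurgeryTrace

open SurgeryTrace in
theorem stmt1_general (n k : ℕ)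
    (x y : Fin (n + 1) → ℝ) (hx : x ∈ Qpos n k) (hy : y ∈ Qpos n k) (hxy : x ≠ y) :
    (surgeryTrace n k x).1 = (surgeryTrace n k y).1 ↔
      ({x, y} : Set (Fin (n + 1) → ℝ)) =
        {Pi.single (0 : Fin (n + 1)) (1 : ℝ), -(Pi.single (0 : Fin (n + 1)) (1 : ℝ))} := by
  constructor
  · intro h
    have hx' := eq_single_zero_or_eq_neg_of_mem_Qpos hx (succ_eq_zero_of_fst_eq h hxy)
    have hy' := eq_single_zero_or_eq_neg_of_mem_Qpos hy (succ_eq_zero_of_fst_eq h.symm hxy.symm)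
    rcases hx' with rfl | rfl <;> rcases hy' with rfl | rfl
    · exact absurd rfl hxy
    · rfl
    · exact Set.pair_comm _ _
    · exact absurd rfl hxy
  · intro h
    have hx' := succ_eq_zero_of_mem_pair (h.subset (Set.mem_insert x {y}))
    have hy' := succ_eq_zero_of_mem_pair (h.subset (Set.mem_insert_of_mem x rfl))
    exact fst_eq_iff.mpr fun j => by simp [hx' j, hy' j]

/-- The positive slice of the local surgery trace has exactly one self-intersection, occurring
at the two points `(±1, 0, …, 0)`: for distinct `x, y ∈ Q⁺`, `π(J(x)) = π(J(y))` iff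
`{x, y} = {e, −e}` where `e = (1, 0, …, 0)`. -/
theorem stmt1 (n k : ℕ) (hn : 1 ≤ n) (hk : k ≤ n)
    (x y : Fin (n + 1) → ℝ) (hx : x ∈ Qpos n k) (hy : y ∈ Qpos n k) (hxy : x ≠ y) :
    (surgeryTrace n k x).1 = (surgeryTrace n k y).1 ↔
      ({x, y} : Set (Fin (n + 1) → ℝ)) =
        {Pi.single (0 : Fin (n + 1)) (1 : ℝ), -(Pi.single (0 : Fin (n + 1)) (1 : ℝ))} :=
  stmt1_general n k x y hx hy hxy
end

section
/- For all integers n ≥ 1 and 0 ≤ k ≤ n, the map x ↦ π(J(x)) is injective on Q⁻. (The negative slice of the local surgery trace is an embedded Lagrangian submanifold.) -/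
/-!
Off the `x₀`-axis the projection `π ∘ J` is injective: the real part of its `j`-th coordinate
is `x_j`, and once some `x_j ≠ 0` is known, the imaginary part `2 σ_j x_j x₀` determines `x₀`.
The negative slice `Q⁻` misses the `x₀`-axis, since there the defining equation reads `x₀² = -1`.
-/

open scoped BigOperators

/-- The negative slice domain `Q⁻ = {x ∈ ℝ^{n+1} : x_0² + ∑ σ_j x_j² = −1}`. -/
def Qneg (n k : ℕ) : Set (Fin (n + 1) → ℝ) :=
  {x | (x 0) ^ 2 + ∑ j, sgn n k j * (x j.succ) ^ 2 = -1}

section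

variable {n k : ℕ}

lemma sgn_ne_zero (j : Fin n) : sgn n k j ≠ 0 := by
  unfold sgn
  split_ifs <;> norm_num

lemma surgeryTrace_fst_re (x : Fin (n + 1) → ℝ) (j : Fin n) :
    ((surgeryTrace n k x).1 j).re = x j.succ := by
  simp [surgeryTrace]

lemma surgeryTrace_fst_im (x : Fin (n + 1) → ℝ) (j : Fin n) :
    ((surgeryTrace n k x).1 j).im = 2 * sgn n k j * x j.succ * x 0 := by
  simp [surgeryTrace]

lemma injOn_surgeryTrace_fst :
    Set.InjOn (fun x => (surgeryTrace n k x).1) {x | ∃ j : Fin n, x j.succ ≠ 0} := by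
  rintro x ⟨j, hj⟩ y - hxy
  have hsucc (i : Fin n) : x i.succ = y i.succ := by
    simpa only [surgeryTrace_fst_re] using congrArg Complex.re (congrFun hxy i)
  have hzero : x 0 = y 0 := by
    have him := congrArg Complex.im (congrFun hxy j)
    simp only [surgeryTrace_fst_im, hsucc j] at him
    have hcoeff : 2 * sgn n k j * y j.succ ≠ 0 :=
      mul_ne_zero (mul_ne_zero two_ne_zero (sgn_ne_zero j)) (hsucc j ▸ hj)
    exact mul_left_cancel₀ hcoeff him
  funext i
  exact Fin.cases hzero hsucc i

lemma exists_succ_ne_zero_of_mem_Qneg {x : Fin (n + 1) → ℝ} (hx : x ∈ Qneg n k) :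
    ∃ j : Fin n, x j.succ ≠ 0 := by
  by_contra! hc
  simp only [Qneg, Set.mem_ofPred_eq, hc, zero_pow two_ne_zero, mul_zero,
    Finset.sum_const_zero, add_zero] at hx
  nlinarith [sq_nonneg (x 0)]

end

theorem stmt2_general (n k : ℕ) :
    Set.InjOn (fun x => (surgeryTrace n k x).1) (Qneg n k) :=
  injOn_surgeryTrace_fst.mono fun _ => exists_succ_ne_zero_of_mem_Qneg

/-- The negative slice of the local surgery trace is embedded: `x ↦ π(J(x))` is injective
on `Q⁻`. -/
theorem stmt2 (n k : ℕ) (hn : 1 ≤ n) (hk : k ≤ n) :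
    Set.InjOn (fun x => (surgeryTrace n k x).1) (Qneg n k) :=
  stmt2_general n k
end

section
/- For all integers n ≥ 1 and 0 ≤ k ≤ n: (a) a point z ∈ ℂ^n lies in π(J(Q⁺)) and satisfies z_j = 0 for all k < j ≤ n if and only if there exists u = (u_0, u_1, …, u_k) ∈ ℝ^{k+1} with ‖u‖ = 1 such that z_j = u_j + 2i·u_0·u_j for 1 ≤ j ≤ k and z_j = 0 for k < j ≤ n; (b) there is no x ∈ Q⁻ with (π(J(x)))_j = 0 for all k < j ≤ n. (The positive slice of the surgery trace meets ℂ^k × {0} exactly in the Whitney k-sphere of radius 1, while the negative slice is disjoint from ℂ^k × {0}.) -/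
open scoped BigOperators

/-!
The real part of `J(x)_j` is `x_j`, so `π(J(x))` vanishes on the coordinates `k < j ≤ n` exactly
when `x` does. On such `x` every negative term of the quadratic form drops out, the form becomes
the squared Euclidean norm of the head `(x_0, …, x_k)`, and `J(x)_j = x_j + 2i·x_0·x_j` for
`j ≤ k`. Hence `Q⁺` meets this locus in the unit sphere of `ℝ^{k+1}`, and `Q⁻`, where the form is
`-1`, misses it.
-/

namespace SurgeryTrace

variable {n k : ℕ}

theorem re_surgeryTrace_fst (x : Fin (n + 1) → ℝ) (j : Fin n) :
    ((surgeryTrace n k x).1 j).re = x j.succ := by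
  simp [surgeryTrace]

theorem surgeryTrace_fst_of_le (x : Fin (n + 1) → ℝ) {j : Fin n} (hj : (j : ℕ) + 1 ≤ k) :
    (surgeryTrace n k x).1 j = x j.succ + 2 * Complex.I * x 0 * x j.succ := by
  simp only [surgeryTrace, sgn, if_pos hj]
  push_cast
  ring

theorem surgeryTrace_fst_eq_zero {x : Fin (n + 1) → ℝ} {j : Fin n} (hx : x j.succ = 0) :
    (surgeryTrace n k x).1 j = 0 := by
  simp [surgeryTrace, hx]

theorem tail_eq_zero_of_surgeryTrace_fst {x : Fin (n + 1) → ℝ}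
    (hx : ∀ j : Fin n, k < (j : ℕ) + 1 → (surgeryTrace n k x).1 j = 0) :
    ∀ j : Fin n, k < (j : ℕ) + 1 → x j.succ = 0 := fun j hj => by
  rw [← re_surgeryTrace_fst (k := k) x j, hx j hj, Complex.zero_re]

def head (hk : k ≤ n) (x : Fin (n + 1) → ℝ) : EuclideanSpace ℝ (Fin (k + 1)) :=
  WithLp.toLp 2 fun i => x (Fin.castLE (Nat.succ_le_succ hk) i)

def extendByZero (u : EuclideanSpace ℝ (Fin (k + 1))) (i : Fin (n + 1)) : ℝ :=
  if h : (i : ℕ) < k + 1 then u ⟨i, h⟩ else 0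

theorem head_extendByZero (hk : k ≤ n) (u : EuclideanSpace ℝ (Fin (k + 1))) :
    head hk (extendByZero u) = u := by
  ext i
  exact dif_pos i.isLt

theorem extendByZero_tail (u : EuclideanSpace ℝ (Fin (k + 1))) :
    ∀ j : Fin n, k < (j : ℕ) + 1 → extendByZero u j.succ = 0 := fun j hj => by
  simp only [extendByZero, Fin.val_succ]
  exact dif_neg (by omega)

variable {x : Fin (n + 1) → ℝ}

theorem sq_add_sum_sgn_mul_sq_eq_sum_sq (hx : ∀ j : Fin n, k < (j : ℕ) + 1 → x j.succ = 0) :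
    x 0 ^ 2 + ∑ j, sgn n k j * x j.succ ^ 2 = ∑ i, x i ^ 2 := by
  rw [Fin.sum_univ_succ]
  congr 1
  refine Finset.sum_congr rfl fun j _ => ?_
  by_cases hj : (j : ℕ) + 1 ≤ k
  · simp [sgn, hj]
  · simp [hx j (by omega)]

theorem sum_sq_eq_norm_head_sq (hk : k ≤ n)
    (hx : ∀ j : Fin n, k < (j : ℕ) + 1 → x j.succ = 0) :
    ∑ i, x i ^ 2 = ‖head hk x‖ ^ 2 := by
  rw [EuclideanSpace.real_norm_sq_eq]
  refine (Fintype.sum_of_injective _ (Fin.castLE_injective (Nat.succ_le_succ hk)) _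
    (fun i => x i ^ 2) ?_ fun _ => rfl).symm
  intro i hi
  induction i using Fin.cases with
  | zero => exact absurd ⟨0, rfl⟩ hi
  | succ j =>
    by_cases hj : (j : ℕ) + 1 ≤ k
    · exact absurd ⟨⟨j + 1, Nat.lt_succ_of_le hj⟩, rfl⟩ hi
    · simp [hx j (by omega)]

theorem quadraticForm_eq_norm_head_sq (hk : k ≤ n)
    (hx : ∀ j : Fin n, k < (j : ℕ) + 1 → x j.succ = 0) :
    x 0 ^ 2 + ∑ j, sgn n k j * x j.succ ^ 2 = ‖head hk x‖ ^ 2 := by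
  rw [sq_add_sum_sgn_mul_sq_eq_sum_sq hx, sum_sq_eq_norm_head_sq hk hx]

theorem mem_Qpos_iff_norm_head_eq_one (hk : k ≤ n)
    (hx : ∀ j : Fin n, k < (j : ℕ) + 1 → x j.succ = 0) :
    x ∈ Qpos n k ↔ ‖head hk x‖ = 1 := by
  rw [Qpos, Set.mem_ofPred_eq, quadraticForm_eq_norm_head_sq hk hx,
    pow_eq_one_iff_of_nonneg (norm_nonneg _) two_ne_zero]

theorem notMem_Qneg (hk : k ≤ n) (hx : ∀ j : Fin n, k < (j : ℕ) + 1 → x j.succ = 0) :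
    x ∉ Qneg n k := by
  rw [Qneg, Set.mem_ofPred_eq, quadraticForm_eq_norm_head_sq hk hx]
  nlinarith [sq_nonneg ‖head hk x‖]

theorem surgeryTrace_fst_eq_whitney (hk : k ≤ n) (x : Fin (n + 1) → ℝ) (j : Fin n)
    (hj : (j : ℕ) + 1 ≤ k) :
    (surgeryTrace n k x).1 j = (head hk x ⟨j + 1, Nat.lt_succ_of_le hj⟩ : ℂ) +
      2 * Complex.I * (head hk x 0 : ℂ) * (head hk x ⟨j + 1, Nat.lt_succ_of_le hj⟩ : ℂ) := by
  rw [surgeryTrace_fst_of_le x hj]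
  rfl

end SurgeryTrace

open SurgeryTrace in
theorem stmt4_general (n k : ℕ) (hk : k ≤ n) :
    (∀ z : Fin n → ℂ,
      ((∃ x ∈ Qpos n k, (surgeryTrace n k x).1 = z) ∧
          (∀ j : Fin n, k < (j : ℕ) + 1 → z j = 0)) ↔
        (∃ u : EuclideanSpace ℝ (Fin (k + 1)), ‖u‖ = 1 ∧
          (∀ j : Fin n, ∀ h : (j : ℕ) + 1 ≤ k,
            z j = (u ⟨(j : ℕ) + 1, Nat.lt_succ_of_le h⟩ : ℂ) +
              2 * Complex.I * (u 0 : ℂ) * (u ⟨(j : ℕ) + 1, Nat.lt_succ_of_le h⟩ : ℂ)) ∧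
          (∀ j : Fin n, k < (j : ℕ) + 1 → z j = 0))) ∧
    ¬ ∃ x ∈ Qneg n k, ∀ j : Fin n, k < (j : ℕ) + 1 → (surgeryTrace n k x).1 j = 0 := by
  refine ⟨fun z => ⟨?_, ?_⟩, ?_⟩
  · rintro ⟨⟨x, hx, rfl⟩, hz⟩
    have htail := tail_eq_zero_of_surgeryTrace_fst hz
    exact ⟨head hk x, (mem_Qpos_iff_norm_head_eq_one hk htail).1 hx,
      surgeryTrace_fst_eq_whitney hk x, hz⟩
  · rintro ⟨u, hu, hwhitney, hz⟩
    have htail := extendByZero_tail (n := n) u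
    refine ⟨⟨extendByZero u, ?_, funext fun j => ?_⟩, hz⟩
    · rwa [mem_Qpos_iff_norm_head_eq_one hk htail, head_extendByZero]
    by_cases hj : (j : ℕ) + 1 ≤ k
    · rw [surgeryTrace_fst_eq_whitney hk _ j hj, head_extendByZero, hwhitney j hj]
    · rw [hz j (by omega), surgeryTrace_fst_eq_zero (htail j (by omega))]
  · rintro ⟨x, hx, hz⟩
    exact notMem_Qneg hk (tail_eq_zero_of_surgeryTrace_fst hz) hx

/-- (a) The positive slice of the surgery trace meets `ℂ^k × {0} ⊆ ℂ^n` exactly in the Whitney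
`k`-sphere of radius 1: `z ∈ π(J(Q⁺))` with `z_j = 0` for `k < j ≤ n` iff there is a unit
vector `u ∈ ℝ^{k+1}` with `z_j = u_j + 2i·u_0·u_j` for `1 ≤ j ≤ k` and `z_j = 0` for
`k < j ≤ n`.  (b) The negative slice is disjoint from `ℂ^k × {0}`. -/
theorem stmt4 (n k : ℕ) (hn : 1 ≤ n) (hk : k ≤ n) :
    (∀ z : Fin n → ℂ,
      ((∃ x ∈ Qpos n k, (surgeryTrace n k x).1 = z) ∧
          (∀ j : Fin n, k < (j : ℕ) + 1 → z j = 0)) ↔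
        (∃ u : EuclideanSpace ℝ (Fin (k + 1)), ‖u‖ = 1 ∧
          (∀ j : Fin n, ∀ h : (j : ℕ) + 1 ≤ k,
            z j = (u ⟨(j : ℕ) + 1, Nat.lt_succ_of_le h⟩ : ℂ) +
              2 * Complex.I * (u 0 : ℂ) * (u ⟨(j : ℕ) + 1, Nat.lt_succ_of_le h⟩ : ℂ)) ∧
          (∀ j : Fin n, k < (j : ℕ) + 1 → z j = 0))) ∧
    ¬ ∃ x ∈ Qneg n k, ∀ j : Fin n, k < (j : ℕ) + 1 → (surgeryTrace n k x).1 j = 0 :=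
  stmt4_general n k hk
end

section
/- Let l, n ∈ ℕ, let i : ℝ^l × ℝ → ℂ^n and H : ℝ^l × ℝ → ℝ be smooth, and suppose for every (q, t) ∈ ℝ^l × ℝ: (a) for all v, w ∈ ℝ^l, ω(D_q i(q,t)v, D_q i(q,t)w) = 0; and (b) for all v ∈ ℝ^l, ω(∂_t i(q,t), D_q i(q,t)v) = −(D_q H(q,t))(v). Then the suspension j : ℝ^l × ℝ → ℂ^n × ℂ, j(q, t) = (i(q,t), t + i·H(q,t)), satisfies ω(Dj_{(q,t)} u, Dj_{(q,t)} u') = 0 for every (q,t) and all u, u' ∈ ℝ^l × ℝ, where ℂ^n × ℂ is identified with ℂ^{n+1} and ω denotes the standard symplectic form on the respective space. (The suspension of an exact Lagrangian homotopy is a Lagrangian submanifold.) -/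
open scoped BigOperators

/-! Write a tangent vector as `(v, s) = (v, 0) + s (0, 1)` and put `T = ∂ₜ i`, `x = DH (v, s)`.
By bilinearity, skew-symmetry and (a), the `ℂⁿ`-part of `ω(Dj (v, s), Dj (v', s'))` is
`s' ω(D_q i v, T) + s ω(T, D_q i v')`, which by (b) equals `s' D_q H v - s D_q H v'`. The last
coordinate contributes `Im (conj (s + i x) (s' + i x')) = s x' - x s'`, in which the `∂ₜ H` terms
cancel, leaving `s D_q H v' - s' D_q H v`. -/

section stdSymp

variable {n : ℕ}

lemma stdSymp_add_left (a b c : Fin n → ℂ) :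
    stdSymp n (a + b) c = stdSymp n a c + stdSymp n b c := by
  simp [stdSymp, add_mul, Finset.sum_add_distrib]

lemma stdSymp_add_right (a b c : Fin n → ℂ) :
    stdSymp n a (b + c) = stdSymp n a b + stdSymp n a c := by
  simp [stdSymp, mul_add, Finset.sum_add_distrib]

lemma stdSymp_smul_left (r : ℝ) (a b : Fin n → ℂ) :
    stdSymp n (r • a) b = r * stdSymp n a b := by
  simp [stdSymp, mul_assoc, ← Finset.mul_sum]

lemma stdSymp_smul_right (r : ℝ) (a b : Fin n → ℂ) :
    stdSymp n a (r • b) = r * stdSymp n a b := by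
  simp [stdSymp, mul_left_comm, ← Finset.mul_sum]

lemma stdSymp_swap (a b : Fin n → ℂ) : stdSymp n a b = - stdSymp n b a := by
  rw [stdSymp, stdSymp, ← Complex.conj_im, map_sum]
  simp [mul_comm]

lemma stdSymp_self (a : Fin n → ℂ) : stdSymp n a a = 0 := by
  linarith [stdSymp_swap a a]

end stdSymp

lemma LinearMap.apply_prod_eq_add_smul {E M : Type*} [AddCommGroup E] [Module ℝ E]
    [AddCommGroup M] [Module ℝ M] (f : E × ℝ →ₗ[ℝ] M) (v : E) (s : ℝ) :
    f (v, s) = f (v, 0) + s • f (0, 1) := by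
  rw [← map_smul, ← map_add]
  simp

theorem sympPC_suspension_eq_zero {E : Type*} [AddCommGroup E] [Module ℝ E] {n : ℕ}
    (L : E × ℝ →ₗ[ℝ] Fin n → ℂ) (h : E × ℝ →ₗ[ℝ] ℝ)
    (hL : ∀ v w : E, stdSymp n (L (v, 0)) (L (w, 0)) = 0)
    (hflux : ∀ v : E, stdSymp n (L (0, 1)) (L (v, 0)) = - h (v, 0))
    (u u' : E × ℝ) :
    sympPC n (L u, (u.2 : ℂ) + Complex.I * h u) (L u', (u'.2 : ℂ) + Complex.I * h u') = 0 := by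
  obtain ⟨v, s⟩ := u
  obtain ⟨v', s'⟩ := u'
  have hfiber : ((starRingEnd ℂ) ((s : ℂ) + Complex.I * h (v, s)) *
      ((s' : ℂ) + Complex.I * h (v', s'))).im = s * h (v', s') - h (v, s) * s' := by
    simp [Complex.mul_im]
    ring
  rw [sympPC, hfiber, L.apply_prod_eq_add_smul v, L.apply_prod_eq_add_smul v',
    h.apply_prod_eq_add_smul v, h.apply_prod_eq_add_smul v']
  simp only [stdSymp_add_left, stdSymp_add_right, stdSymp_smul_left, stdSymp_smul_right,
    stdSymp_self, hL, hflux, stdSymp_swap (L (v, 0)) (L (0, 1)), smul_eq_mul]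
  ring

section PartialDerivatives

variable {𝕜 E F G : Type*} [NontriviallyNormedField 𝕜] [NormedAddCommGroup E] [NormedSpace 𝕜 E]
  [NormedAddCommGroup F] [NormedSpace 𝕜 F] [NormedAddCommGroup G] [NormedSpace 𝕜 G]

lemma DifferentiableAt.fderiv_comp_prodMk_left_apply {f : E × F → G} {x : E} {y : F}
    (hf : DifferentiableAt 𝕜 f (x, y)) (v : E) :
    fderiv 𝕜 (fun x' => f (x', y)) x v = fderiv 𝕜 f (x, y) (v, 0) := by
  have hpartial : HasFDerivAt (fun x' => f (x', y))
      ((fderiv 𝕜 f (x, y)).comp (ContinuousLinearMap.inl 𝕜 E F)) x :=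
    hf.hasFDerivAt.comp x (hasFDerivAt_prodMk_left x y)
  rw [hpartial.fderiv]
  rfl

lemma DifferentiableAt.deriv_comp_prodMk_right {f : E × 𝕜 → G} {x : E} {t : 𝕜}
    (hf : DifferentiableAt 𝕜 f (x, t)) :
    deriv (fun s => f (x, s)) t = fderiv 𝕜 f (x, t) (0, 1) :=
  (hf.hasFDerivAt.comp_hasDerivAt t ((hasDerivAt_const t x).prodMk (hasDerivAt_id t))).deriv

end PartialDerivatives

lemma fderiv_suspension_apply {E F : Type*} [NormedAddCommGroup E] [NormedSpace ℝ E]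
    [NormedAddCommGroup F] [NormedSpace ℝ F] {i : E × ℝ → F} {H : E × ℝ → ℝ} {p : E × ℝ}
    (hi : DifferentiableAt ℝ i p) (hH : DifferentiableAt ℝ H p) (u : E × ℝ) :
    fderiv ℝ (fun qt => (i qt, (qt.2 : ℂ) + Complex.I * (H qt : ℂ))) p u
      = (fderiv ℝ i p u, (u.2 : ℂ) + Complex.I * (fderiv ℝ H p u : ℂ)) := by
  have hsnd : HasFDerivAt (fun qt : E × ℝ => (qt.2 : ℂ))
      (Complex.ofRealCLM.comp (ContinuousLinearMap.snd ℝ E ℝ)) p :=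
    Complex.ofRealCLM.hasFDerivAt.comp p hasFDerivAt_snd
  have hIH : HasFDerivAt (fun qt => Complex.I * (H qt : ℂ))
      (Complex.I • Complex.ofRealCLM.comp (fderiv ℝ H p)) p :=
    (Complex.ofRealCLM.hasFDerivAt.comp p hH.hasFDerivAt).const_mul Complex.I
  have hj : HasFDerivAt (fun qt => (i qt, (qt.2 : ℂ) + Complex.I * (H qt : ℂ)))
      ((fderiv ℝ i p).prod (Complex.ofRealCLM.comp (ContinuousLinearMap.snd ℝ E ℝ)
        + Complex.I • Complex.ofRealCLM.comp (fderiv ℝ H p))) p :=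
    hi.hasFDerivAt.prodMk (hsnd.add hIH)
  rw [hj.fderiv]
  rfl

/-- The suspension of an exact Lagrangian homotopy is a Lagrangian submanifold: if each
`i(·, t)` is isotropic and `H` is a flux primitive for the homotopy `t ↦ i(·, t)`, then the
suspension `j(q, t) = (i(q,t), t + i·H(q,t))` has isotropic derivative everywhere. -/
theorem stmt10 (l n : ℕ)
    (i : (Fin l → ℝ) × ℝ → Fin n → ℂ) (H : (Fin l → ℝ) × ℝ → ℝ)
    (hi : ContDiff ℝ (⊤ : ℕ∞) i) (hH : ContDiff ℝ (⊤ : ℕ∞) H)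
    (ha : ∀ (q : Fin l → ℝ) (t : ℝ) (v w : Fin l → ℝ),
      stdSymp n (fderiv ℝ (fun q' => i (q', t)) q v) (fderiv ℝ (fun q' => i (q', t)) q w) = 0)
    (hb : ∀ (q : Fin l → ℝ) (t : ℝ) (v : Fin l → ℝ),
      stdSymp n (deriv (fun s => i (q, s)) t) (fderiv ℝ (fun q' => i (q', t)) q v)
        = - fderiv ℝ (fun q' => H (q', t)) q v) :
    ∀ (p u u' : (Fin l → ℝ) × ℝ),
      sympPC n
        (fderiv ℝ (fun qt => (i qt, (qt.2 : ℂ) + Complex.I * (H qt : ℂ))) p u)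
        (fderiv ℝ (fun qt => (i qt, (qt.2 : ℂ) + Complex.I * (H qt : ℂ))) p u') = 0 := by
  rintro ⟨q, t⟩ u u'
  have hid : DifferentiableAt ℝ i (q, t) := hi.differentiable (by simp) _
  have hHd : DifferentiableAt ℝ H (q, t) := hH.differentiable (by simp) _
  have hLag : ∀ v w, stdSymp n (fderiv ℝ i (q, t) (v, 0)) (fderiv ℝ i (q, t) (w, 0)) = 0 :=
    fun v w => by simpa only [hid.fderiv_comp_prodMk_left_apply] using ha q t v w
  have hflux : ∀ v, stdSymp n (fderiv ℝ i (q, t) (0, 1)) (fderiv ℝ i (q, t) (v, 0))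
      = - fderiv ℝ H (q, t) (v, 0) := fun v => by
    simpa only [hid.fderiv_comp_prodMk_left_apply, hHd.fderiv_comp_prodMk_left_apply,
      hid.deriv_comp_prodMk_right] using hb q t v
  rw [fderiv_suspension_apply hid hHd, fderiv_suspension_apply hid hHd]
  exact sympPC_suspension_eq_zero (fderiv ℝ i (q, t)).toLinearMap (fderiv ℝ H (q, t)).toLinearMap
    hLag hflux u u'
end

section
/- Let I be a finite index set, and for each α ∈ I let l_α, n_α ∈ ℕ, let i^α : ℝ^{l_α} × ℝ → ℂ^{n_α} and H^α : ℝ^{l_α} × ℝ → ℝ be smooth such that for every (q, t): (a) for all v, w ∈ ℝ^{l_α}, ω(D_q i^α(q,t)v, D_q i^α(q,t)w) = 0; and (b) for all v ∈ ℝ^{l_α}, ω(∂_t i^α(q,t), D_q i^α(q,t)v) = −(D_q H^α(q,t))(v). Let m ∈ ℕ and let ρ^α : ℝ^m → ℝ be smooth for each α ∈ I. Define j : (∏_{α∈I} ℝ^{l_α}) × ℝ^m → (∏_{α∈I} ℂ^{n_α}) × ℂ^m by: the ℂ^{n_α}-component of j((q^α)_α, y) is i^α(q^α, ρ^α(y)),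 and the i-th coordinate of the ℂ^m-component is y_i + i·∑_{α∈I} H^α(q^α, ρ^α(y))·(∂ρ^α/∂y_i)(y). Then for every point and all tangent vectors u, u' of the domain, Ω(Dj u, Dj u') = 0, where Ω is the sum of the standard symplectic forms on the factors ℂ^{n_α} and on ℂ^m. (Generalized suspension: j parameterizes a Lagrangian submanifold.) -/
/-!
Write the `ℂ^m`-component of `j` as `y + i·θ`, where `θ = ∑_α H^α(q^α, ρ^α y) dρ^α(y)` is a
one-form on `ℝ^m`. In these coordinates the standard form on `ℂ^m` pairs the two tangent vectors
to `Dθ(u')(u_y) - Dθ(u)(u_y')`; the second derivatives of the `ρ^α` drop out by symmetry, and so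
do the `∂_t H^α` terms, leaving `∑_α (D_qH^α(u'_q) dρ^α(u_y) - D_qH^α(u_q) dρ^α(u'_y))`.
On the factor `ℂ^{n_α}` the derivative is `D_q i^α(u_q) + dρ^α(u_y) ∂_t i^α`, and isotropy (a)
together with the flux identity (b) make its symplectic pairing exactly the negative of the
`α`-term above.
-/

open scoped BigOperators

open ContinuousLinearMap

section StdSymp

variable {N : ℕ}

theorem stdSymp_add_left_s11 (u v w : Fin N → ℂ) :
    stdSymp N (u + v) w = stdSymp N u w + stdSymp N v w := by
  simp [stdSymp, add_mul, Finset.sum_add_distrib]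

theorem stdSymp_smul_left_s11 (r : ℝ) (u v : Fin N → ℂ) :
    stdSymp N (r • u) v = r * stdSymp N u v := by
  simp [stdSymp, Finset.mul_sum, Complex.real_smul, mul_assoc]

theorem stdSymp_swap_s11 (u v : Fin N → ℂ) : stdSymp N v u = -stdSymp N u v := by
  simp only [stdSymp, ← Complex.conj_im, map_sum, map_mul, Complex.conj_conj, mul_comm]

theorem stdSymp_self_s11 (u : Fin N → ℂ) : stdSymp N u u = 0 := by
  linarith [stdSymp_swap_s11 u u]

theorem stdSymp_add_right_s11 (u v w : Fin N → ℂ) :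
    stdSymp N u (v + w) = stdSymp N u v + stdSymp N u w := by
  rw [stdSymp_swap_s11, stdSymp_add_left_s11, stdSymp_swap_s11 v, stdSymp_swap_s11 w]; ring

theorem stdSymp_smul_right_s11 (r : ℝ) (u v : Fin N → ℂ) :
    stdSymp N u (r • v) = r * stdSymp N u v := by
  rw [stdSymp_swap_s11, stdSymp_smul_left_s11, stdSymp_swap_s11 v]; ring

end StdSymp

/-- The identification `T*ℝ^m ≅ ℂ^m`, `(y, p) ↦ y + i·p`, a covector `p` being read in the
standard basis. -/
noncomputable def cotangentToComplex (m : ℕ) :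
    (Fin m → ℝ) × ((Fin m → ℝ) →L[ℝ] ℝ) →L[ℝ] (Fin m → ℂ) :=
  ContinuousLinearMap.pi fun k => Complex.ofRealCLM.comp ((proj k).comp (fst ℝ _ _)) +
    Complex.I • Complex.ofRealCLM.comp ((apply ℝ ℝ (Pi.single k 1)).comp (snd ℝ _ _))

theorem cotangentToComplex_apply {m : ℕ} (y : Fin m → ℝ) (φ : (Fin m → ℝ) →L[ℝ] ℝ) :
    cotangentToComplex m (y, φ) = fun k => (y k : ℂ) + Complex.I * (φ (Pi.single k 1) : ℂ) :=
  rfl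

theorem ContinuousLinearMap.apply_eq_sum_mul_single {m : ℕ} (φ : (Fin m → ℝ) →L[ℝ] ℝ)
    (y : Fin m → ℝ) : φ y = ∑ k, y k * φ (Pi.single k 1) := by
  conv_lhs => rw [← Finset.univ_sum_single y]
  rw [map_sum]
  refine Finset.sum_congr rfl fun k _ => ?_
  rw [← smul_eq_mul, ← map_smul, ← Pi.single_smul, smul_eq_mul, mul_one]

theorem stdSymp_cotangentToComplex {m : ℕ} (y y' : Fin m → ℝ) (φ φ' : (Fin m → ℝ) →L[ℝ] ℝ) :
    stdSymp m (cotangentToComplex m (y, φ)) (cotangentToComplex m (y', φ')) = φ' y - φ y' := by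
  rw [φ'.apply_eq_sum_mul_single, φ.apply_eq_sum_mul_single, ← Finset.sum_sub_distrib,
    stdSymp, Complex.im_sum]
  refine Finset.sum_congr rfl fun k _ => ?_
  simp [cotangentToComplex_apply]
  ring

section Calculus

variable {E F G : Type*} [NormedAddCommGroup E] [NormedSpace ℝ E] [NormedAddCommGroup F]
  [NormedSpace ℝ F] [NormedAddCommGroup G] [NormedSpace ℝ G]

theorem fderiv_prod_apply_eq_add {f : E × ℝ → G} {x : E} {t : ℝ}
    (hf : DifferentiableAt ℝ f (x, t)) (v : E) (s : ℝ) :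
    fderiv ℝ f (x, t) (v, s) =
      fderiv ℝ (fun x' => f (x', t)) x v + s • deriv (fun t' => f (x, t')) t := by
  have hleft : HasFDerivAt (fun x' => f (x', t)) ((fderiv ℝ f (x, t)).comp (inl ℝ E ℝ)) x :=
    hf.hasFDerivAt.comp x (hasFDerivAt_prodMk_left x t)
  have hright : HasFDerivAt (fun t' => f (x, t')) ((fderiv ℝ f (x, t)).comp (inr ℝ E ℝ)) t :=
    hf.hasFDerivAt.comp t (hasFDerivAt_prodMk_right x t)
  rw [hleft.fderiv, ← fderiv_apply_one_eq_deriv, hright.fderiv]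
  simp [← map_smul, ← map_add]

variable {N : ℕ}

theorem stdSymp_fderiv_of_flux {f : E × ℝ → Fin N → ℂ} {K : E × ℝ → ℝ} {x : E} {t : ℝ}
    (hf : DifferentiableAt ℝ f (x, t))
    (hiso : ∀ v w, stdSymp N (fderiv ℝ (fun x' => f (x', t)) x v)
      (fderiv ℝ (fun x' => f (x', t)) x w) = 0)
    (hflux : ∀ v, stdSymp N (deriv (fun t' => f (x, t')) t) (fderiv ℝ (fun x' => f (x', t)) x v)
      = -fderiv ℝ (fun x' => K (x', t)) x v)
    (v w : E) (s r : ℝ) :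
    stdSymp N (fderiv ℝ f (x, t) (v, s)) (fderiv ℝ f (x, t) (w, r)) =
      r * fderiv ℝ (fun x' => K (x', t)) x v - s * fderiv ℝ (fun x' => K (x', t)) x w := by
  simp only [fderiv_prod_apply_eq_add hf, stdSymp_add_left_s11, stdSymp_add_right_s11,
    stdSymp_smul_left_s11, stdSymp_smul_right_s11, hiso, stdSymp_self_s11, hflux]
  rw [stdSymp_swap_s11, hflux]
  ring

theorem fderiv_prod_antisymm_mul {K : E × ℝ → ℝ} {x : E} {t : ℝ}
    (hK : DifferentiableAt ℝ K (x, t)) (v w : E) (s r : ℝ) :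
    fderiv ℝ K (x, t) (w, r) * s - fderiv ℝ K (x, t) (v, s) * r =
      fderiv ℝ (fun x' => K (x', t)) x w * s - fderiv ℝ (fun x' => K (x', t)) x v * r := by
  simp only [fderiv_prod_apply_eq_add hK, smul_eq_mul]
  ring

theorem fderiv_smul_fderiv_comp_antisymm {φ : E → ℝ} {ρ : F → ℝ} {g : E → F} {x : E}
    (hφ : DifferentiableAt ℝ φ x) (hg : DifferentiableAt ℝ g x) (hρ : ContDiffAt ℝ 2 ρ (g x))
    (u u' : E) :
    fderiv ℝ (fun x => φ x • fderiv ℝ ρ (g x)) x u' (fderiv ℝ g x u) -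
        fderiv ℝ (fun x => φ x • fderiv ℝ ρ (g x)) x u (fderiv ℝ g x u') =
      fderiv ℝ φ x u' * fderiv ℝ ρ (g x) (fderiv ℝ g x u) -
        fderiv ℝ φ x u * fderiv ℝ ρ (g x) (fderiv ℝ g x u') := by
  have hρ' : DifferentiableAt ℝ (fderiv ℝ ρ) (g x) :=
    (hρ.fderiv_right (m := 1) le_rfl).differentiableAt one_ne_zero
  have hsymm := (hρ.isSymmSndFDerivAt (by simp)).eq (fderiv ℝ g x u) (fderiv ℝ g x u')
  rw [fderiv_fun_smul hφ (hρ'.fun_comp' x hg), fderiv_fun_comp x hρ' hg]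
  simp only [add_apply, smul_apply, comp_apply, smulRight_apply, smul_eq_mul, hsymm]
  ring

theorem hasFDerivAt_comp_apply_prodMk {ι : Type*} [Fintype ι] {X : ι → Type*}
    [∀ α, NormedAddCommGroup (X α)] [∀ α, NormedSpace ℝ (X α)]
    {α : ι} {f : X α × ℝ → G} {ρ : F → ℝ} {p : (∀ α, X α) × F}
    (hf : DifferentiableAt ℝ f (p.1 α, ρ p.2)) (hρ : DifferentiableAt ℝ ρ p.2) :
    HasFDerivAt (fun qy : (∀ α, X α) × F => f (qy.1 α, ρ qy.2))
      ((fderiv ℝ f (p.1 α, ρ p.2)).comp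
        (((proj α).comp (fst ℝ _ _)).prod ((fderiv ℝ ρ p.2).comp (snd ℝ _ _)))) p :=
  hf.hasFDerivAt.comp p <| ((proj α).comp (fst ℝ _ F)).hasFDerivAt.prodMk
    (hρ.hasFDerivAt.comp p hasFDerivAt_snd)

end Calculus

section Suspension

variable {I : Type*} [Fintype I] {l nn : I → ℕ} {m : ℕ}

noncomputable def fluxForm (H : ∀ α : I, (Fin (l α) → ℝ) × ℝ → ℝ) (ρ : I → (Fin m → ℝ) → ℝ)
    (qy : (∀ α : I, Fin (l α) → ℝ) × (Fin m → ℝ)) : (Fin m → ℝ) →L[ℝ] ℝ :=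
  ∑ α, H α (qy.1 α, ρ α qy.2) • fderiv ℝ (ρ α) qy.2

noncomputable def suspension (i : ∀ α : I, (Fin (l α) → ℝ) × ℝ → Fin (nn α) → ℂ)
    (H : ∀ α : I, (Fin (l α) → ℝ) × ℝ → ℝ) (ρ : I → (Fin m → ℝ) → ℝ)
    (qy : (∀ α : I, Fin (l α) → ℝ) × (Fin m → ℝ)) : (∀ α : I, Fin (nn α) → ℂ) × (Fin m → ℂ) :=
  (fun α => i α (qy.1 α, ρ α qy.2), cotangentToComplex m (qy.2, fluxForm H ρ qy))

variable {i : ∀ α : I, (Fin (l α) → ℝ) × ℝ → Fin (nn α) → ℂ}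
  {H : ∀ α : I, (Fin (l α) → ℝ) × ℝ → ℝ} {ρ : I → (Fin m → ℝ) → ℝ}
  {p : (∀ α : I, Fin (l α) → ℝ) × (Fin m → ℝ)}

theorem differentiableAt_fluxForm_summand {α : I}
    (hH : DifferentiableAt ℝ (H α) (p.1 α, ρ α p.2)) (hρ : ContDiffAt ℝ 2 (ρ α) p.2) :
    DifferentiableAt ℝ (fun qy : (∀ α : I, Fin (l α) → ℝ) × (Fin m → ℝ) =>
      H α (qy.1 α, ρ α qy.2) • fderiv ℝ (ρ α) qy.2) p :=
  (hasFDerivAt_comp_apply_prodMk hH (hρ.differentiableAt two_ne_zero)).differentiableAt.smul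
    (((hρ.fderiv_right (m := 1) le_rfl).differentiableAt one_ne_zero).fun_comp' p
      differentiableAt_snd)

theorem differentiableAt_fluxForm (hH : ∀ α, DifferentiableAt ℝ (H α) (p.1 α, ρ α p.2))
    (hρ : ∀ α, ContDiffAt ℝ 2 (ρ α) p.2) : DifferentiableAt ℝ (fluxForm H ρ) p :=
  DifferentiableAt.fun_sum fun α _ => differentiableAt_fluxForm_summand (hH α) (hρ α)

theorem fderiv_suspension_apply_s11 (hi : ∀ α, DifferentiableAt ℝ (i α) (p.1 α, ρ α p.2))
    (hH : ∀ α, DifferentiableAt ℝ (H α) (p.1 α, ρ α p.2))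
    (hρ : ∀ α, ContDiffAt ℝ 2 (ρ α) p.2) (w : (∀ α : I, Fin (l α) → ℝ) × (Fin m → ℝ)) :
    fderiv ℝ (suspension i H ρ) p w =
      (fun α => fderiv ℝ (i α) (p.1 α, ρ α p.2) (w.1 α, fderiv ℝ (ρ α) p.2 w.2),
        cotangentToComplex m (w.2, fderiv ℝ (fluxForm H ρ) p w)) := by
  have hfib := hasFDerivAt_pi.2 fun α =>
    hasFDerivAt_comp_apply_prodMk (hi α) ((hρ α).differentiableAt two_ne_zero)
  have hbase := (cotangentToComplex m).hasFDerivAt.comp p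
    (hasFDerivAt_snd.prodMk (differentiableAt_fluxForm hH hρ).hasFDerivAt)
  have hsusp : HasFDerivAt (suspension i H ρ) _ p := hfib.prodMk hbase
  rw [hsusp.fderiv]
  rfl

theorem fderiv_fluxForm_antisymm (hH : ∀ α, DifferentiableAt ℝ (H α) (p.1 α, ρ α p.2))
    (hρ : ∀ α, ContDiffAt ℝ 2 (ρ α) p.2) (u u' : (∀ α : I, Fin (l α) → ℝ) × (Fin m → ℝ)) :
    fderiv ℝ (fluxForm H ρ) p u' u.2 - fderiv ℝ (fluxForm H ρ) p u u'.2 =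
      ∑ α, (fderiv ℝ (fun q' => H α (q', ρ α p.2)) (p.1 α) (u'.1 α) * fderiv ℝ (ρ α) p.2 u.2 -
        fderiv ℝ (fun q' => H α (q', ρ α p.2)) (p.1 α) (u.1 α) * fderiv ℝ (ρ α) p.2 u'.2) := by
  have hφ := fun α => hasFDerivAt_comp_apply_prodMk (hH α) ((hρ α).differentiableAt two_ne_zero)
  have hsum : fderiv ℝ (fluxForm H ρ) p = ∑ α, fderiv ℝ
      (fun qy : (∀ α : I, Fin (l α) → ℝ) × (Fin m → ℝ) =>
        H α (qy.1 α, ρ α qy.2) • fderiv ℝ (ρ α) qy.2) p :=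
    fderiv_fun_sum fun α _ => differentiableAt_fluxForm_summand (hH α) (hρ α)
  rw [hsum, sum_apply, sum_apply, sum_apply, sum_apply, ← Finset.sum_sub_distrib]
  refine Finset.sum_congr rfl fun α _ => ?_
  have h := fderiv_smul_fderiv_comp_antisymm (hφ α).differentiableAt differentiableAt_snd
    (hρ α) u u'
  simp only [fderiv_snd, coe_snd', (hφ α).fderiv, comp_apply, prod_apply, coe_fst', proj_apply]
    at h
  rw [h]
  exact fderiv_prod_antisymm_mul (hH α) _ _ _ _

end Suspension

/-- Generalized suspension: given finitely many exact Lagrangian homotopies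
`i^α : ℝ^{l_α} × ℝ → ℂ^{n_α}` with flux primitives `H^α`, and smooth reparameterizations
`ρ^α : ℝ^m → ℝ`, the map
`j((q^α)_α, y) = ((i^α(q^α, ρ^α(y)))_α, (y_i + i·∑_α H^α(q^α, ρ^α(y))·∂ρ^α/∂y_i)_i)`
has isotropic derivative for the sum `Ω` of the standard symplectic forms on the factors. -/
theorem stmt11 (I : Type) [Fintype I] (l nn : I → ℕ) (m : ℕ)
    (i : ∀ α : I, (Fin (l α) → ℝ) × ℝ → Fin (nn α) → ℂ)
    (H : ∀ α : I, (Fin (l α) → ℝ) × ℝ → ℝ)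
    (ρ : ∀ α : I, (Fin m → ℝ) → ℝ)
    (hi : ∀ α, ContDiff ℝ (⊤ : ℕ∞) (i α)) (hH : ∀ α, ContDiff ℝ (⊤ : ℕ∞) (H α))
    (hρ : ∀ α, ContDiff ℝ (⊤ : ℕ∞) (ρ α))
    (ha : ∀ (α : I) (q : Fin (l α) → ℝ) (t : ℝ) (v w : Fin (l α) → ℝ),
      stdSymp (nn α) (fderiv ℝ (fun q' => i α (q', t)) q v)
        (fderiv ℝ (fun q' => i α (q', t)) q w) = 0)
    (hb : ∀ (α : I) (q : Fin (l α) → ℝ) (t : ℝ) (v : Fin (l α) → ℝ),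
      stdSymp (nn α) (deriv (fun s => i α (q, s)) t) (fderiv ℝ (fun q' => i α (q', t)) q v)
        = - fderiv ℝ (fun q' => H α (q', t)) q v) :
    let j : ((∀ α : I, Fin (l α) → ℝ) × (Fin m → ℝ)) →
        ((∀ α : I, Fin (nn α) → ℂ) × (Fin m → ℂ)) :=
      fun qy => (fun α => i α (qy.1 α, ρ α qy.2),
        fun idx => (qy.2 idx : ℂ) + Complex.I *
          ((∑ α : I, H α (qy.1 α, ρ α qy.2) * fderiv ℝ (ρ α) qy.2 (Pi.single idx 1) : ℝ) : ℂ))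
    ∀ (p u u' : (∀ α : I, Fin (l α) → ℝ) × (Fin m → ℝ)),
      (∑ α : I, stdSymp (nn α) ((fderiv ℝ j p u).1 α) ((fderiv ℝ j p u').1 α)) +
        stdSymp m (fderiv ℝ j p u).2 (fderiv ℝ j p u').2 = 0 := by
  intro j p u u'
  have hj : j = suspension i H ρ := by
    funext qy
    simp [j, suspension, fluxForm, cotangentToComplex_apply]
  have hi' : ∀ α, DifferentiableAt ℝ (i α) (p.1 α, ρ α p.2) :=
    fun α => (hi α).differentiable (by simp) _
  have hH' : ∀ α, DifferentiableAt ℝ (H α) (p.1 α, ρ α p.2) :=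
    fun α => (hH α).differentiable (by simp) _
  have hρ' : ∀ α, ContDiffAt ℝ 2 (ρ α) p.2 :=
    fun α => ((hρ α).of_le (by norm_cast)).contDiffAt
  simp only [hj, fderiv_suspension_apply_s11 hi' hH' hρ', stdSymp_cotangentToComplex,
    fderiv_fluxForm_antisymm hH' hρ',
    stdSymp_fderiv_of_flux (hi' _) (ha _ _ _) (hb _ _ _), ← Finset.sum_add_distrib]
  exact Finset.sum_eq_zero fun α _ => by ring
end

section
/- Let m, n ∈ ℕ, let U ⊆ ℝ^m be open, let j : U → ℂ^n × ℂ be smooth, and let x₀ ∈ U be such that: Dj_{x₀} is injective; ω(Dj_{x₀} v, Dj_{x₀} w) = 0 for all v, w ∈ ℝ^m (with ℂ^n × ℂ identified with ℂ^{n+1}); and the differential at x₀ of the function f := Re ∘ pr₂ ∘ j is nonzero (x₀ is a regular point of the cobordism height). Then for all v, w ∈ ker(Df_{x₀}): ω_{ℂ^n}(D(π∘j)_{x₀} v, D(π∘j)_{x₀} w) = 0, and the restriction of D(π∘j)_{x₀} to ker(Df_{x₀}) is injective. (A regular slice of an immersed Lagrangian cobordism is an immersed Lagrangian submanifold.) 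-/
/-!
Everything happens at the level of the linear map `L = Dj_{x₀}`. On `ker Df_{x₀}` the `ℂ`-components
of `L v` are purely imaginary, and the form `Im (conj a * b)` vanishes on purely imaginary numbers,
so `ω(Lv, Lw)` reduces to the `ℂ^n`-part: that is isotropy. For injectivity, if `u ∈ ker Df_{x₀}`
has `π(Lu) = 0` then `Lu = (0, i t)`, and `ω(Lx, Lu) = Re(pr₂ Lx) · t` for every `x`. Choosing `x`
with `Df_{x₀} x ≠ 0` forces `t = 0`, hence `Lu = 0` and `u = 0` since `L` is injective.
-/

open scoped BigOperators

open scoped ComplexConjugate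

lemma Complex.im_conj_mul_of_re_eq_zero {a b : ℂ} (ha : a.re = 0) (hb : b.re = 0) :
    (conj a * b).im = 0 := by
  simp [Complex.mul_im, ha, hb]

namespace sympPC

variable {n : ℕ}

lemma eq_stdSymp_of_re_eq_zero {u v : (Fin n → ℂ) × ℂ} (hu : u.2.re = 0) (hv : v.2.re = 0) :
    sympPC n u v = stdSymp n u.1 v.1 := by
  rw [sympPC, Complex.im_conj_mul_of_re_eq_zero hu hv, add_zero]

lemma eq_re_mul_im_of_fst_eq_zero (u : (Fin n → ℂ) × ℂ) {v : (Fin n → ℂ) × ℂ} (hv₁ : v.1 = 0)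
    (hv₂ : v.2.re = 0) : sympPC n u v = u.2.re * v.2.im := by
  simp [sympPC, stdSymp, hv₁, Complex.mul_im, hv₂]

end sympPC

section LagrangianSlice

variable {V : Type*} [AddCommGroup V] [Module ℝ V] {n : ℕ} {L : V →ₗ[ℝ] (Fin n → ℂ) × ℂ}

lemma stdSymp_fst_eq_zero_of_re_snd_eq_zero (hlag : ∀ v w, sympPC n (L v) (L w) = 0) {v w : V}
    (hv : (L v).2.re = 0) (hw : (L w).2.re = 0) : stdSymp n (L v).1 (L w).1 = 0 := by
  rw [← sympPC.eq_stdSymp_of_re_eq_zero hv hw, hlag]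

lemma eq_zero_of_fst_eq_zero_of_re_snd_eq_zero (hlag : ∀ v w, sympPC n (L v) (L w) = 0)
    (hreg : ∃ x, (L x).2.re ≠ 0) {u : V} (hu₁ : (L u).1 = 0) (hu₂ : (L u).2.re = 0) :
    L u = 0 := by
  obtain ⟨x, hx⟩ := hreg
  have him : (L u).2.im = 0 := by
    have h := hlag x u
    rw [sympPC.eq_re_mul_im_of_fst_eq_zero _ hu₁ hu₂] at h
    exact (mul_eq_zero.mp h).resolve_left hx
  exact Prod.ext hu₁ (Complex.ext hu₂ him)

lemma injOn_fst_of_re_snd_eq_zero (hinj : Function.Injective L)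
    (hlag : ∀ v w, sympPC n (L v) (L w) = 0) (hreg : ∃ x, (L x).2.re ≠ 0) :
    Set.InjOn (fun v => (L v).1) {v | (L v).2.re = 0} := by
  intro v (hv : (L v).2.re = 0) w (hw : (L w).2.re = 0) hvw
  rw [← sub_eq_zero, ← hinj.eq_iff, map_zero]
  refine eq_zero_of_fst_eq_zero_of_re_snd_eq_zero hlag hreg ?_ ?_
  · simpa [sub_eq_zero] using hvw
  · simp [hv, hw]

end LagrangianSlice

/-- A regular slice of an immersed Lagrangian cobordism is an immersed Lagrangian
submanifold: if `j` is a Lagrangian immersion at `x₀` and `x₀` is a regular point of the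
height `f = Re ∘ pr₂ ∘ j`, then on `ker Df_{x₀}` the derivative of `π ∘ j` is isotropic for
the standard symplectic form on `ℂ^n` and injective. -/
theorem stmt12 (m n : ℕ) (U : Set (Fin m → ℝ)) (hU : IsOpen U)
    (j : (Fin m → ℝ) → (Fin n → ℂ) × ℂ) (hj : ContDiffOn ℝ (⊤ : ℕ∞) j U)
    (x₀ : Fin m → ℝ) (hx₀ : x₀ ∈ U)
    (hinj : Function.Injective (fderiv ℝ j x₀))
    (hlag : ∀ v w : Fin m → ℝ, sympPC n (fderiv ℝ j x₀ v) (fderiv ℝ j x₀ w) = 0)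
    (hreg : fderiv ℝ (fun x => ((j x).2).re) x₀ ≠ 0) :
    (∀ v ∈ {v : Fin m → ℝ | fderiv ℝ (fun x => ((j x).2).re) x₀ v = 0},
      ∀ w ∈ {v : Fin m → ℝ | fderiv ℝ (fun x => ((j x).2).re) x₀ v = 0},
        stdSymp n (fderiv ℝ (fun x => (j x).1) x₀ v) (fderiv ℝ (fun x => (j x).1) x₀ w) = 0) ∧
    Set.InjOn (fderiv ℝ (fun x => (j x).1) x₀)
      {v : Fin m → ℝ | fderiv ℝ (fun x => ((j x).2).re) x₀ v = 0} := by
  have hdiff : HasFDerivAt j (fderiv ℝ j x₀) x₀ :=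
    ((hj.differentiableOn (by simp)).differentiableAt (hU.mem_nhds hx₀)).hasFDerivAt
  set L := fderiv ℝ j x₀
  have hπ : fderiv ℝ (fun x => (j x).1) x₀ = (ContinuousLinearMap.fst ℝ _ _).comp L :=
    hdiff.fst.fderiv
  have hf : fderiv ℝ (fun x => ((j x).2).re) x₀ =
      Complex.reCLM.comp ((ContinuousLinearMap.snd ℝ _ _).comp L) :=
    (Complex.reCLM.hasFDerivAt.comp x₀ hdiff.snd).fderiv
  have hreg' : ∃ x, (L x).2.re ≠ 0 := by
    contrapose! hreg
    ext1 x
    simpa [hf] using hreg x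
  simp only [hπ, hf, ContinuousLinearMap.coe_comp, Function.comp_apply,
    ContinuousLinearMap.coe_fst', ContinuousLinearMap.coe_snd', Complex.reCLM_apply]
  exact ⟨fun v hv w hw => stdSymp_fst_eq_zero_of_re_snd_eq_zero (L := L.toLinearMap) hlag hv hw,
    injOn_fst_of_re_snd_eq_zero (L := L.toLinearMap) hinj hlag hreg'⟩
end

section
/- Let n ∈ ℕ, let U ⊆ ℝ^{n+1} be open, let j : U → ℂ^n × ℂ be smooth, and let x ∈ U be such that Dj_x is injective and ω(Dj_x v, Dj_x w) = 0 for all v, w ∈ ℝ^{n+1} (so the image of Dj_x is a Lagrangian subspace of ℂ^{n+1}). Then it is not the case that both D(Re ∘ pr₂ ∘ j)_x = 0 and D(Im ∘ pr₂ ∘ j)_x = 0. (A point of a Lagrangian cobordism cannot be a critical point of both the real and the imaginary projection to the cobordism factor ℂ.) -/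
open scoped BigOperators

/-!
If both partial derivatives of `pr₂ ∘ j` vanish at `x`, then `Dj_x` takes values in `ℂ^n × 0`,
so its image is an `(n+1)`-dimensional real subspace `L` of `ℂ^n` on which `ω = Im ⟪·,·⟫`
vanishes. For such an isotropic `L`, the subspaces `L` and `i • L` meet only in `0`, because
`ω(w, i • w) = ‖w‖²`; hence `2 (n+1) = 2 dim L ≤ dim_ℝ ℂ^n = 2n`, a contradiction.
-/

open Module Complex
open scoped InnerProductSpace

section Isotropic

variable {E : Type*} [NormedAddCommGroup E] [InnerProductSpace ℂ E]

noncomputable def rotI : E ≃ₗ[ℝ] E :=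
  (LinearEquiv.smulOfNeZero ℂ E I I_ne_zero).restrictScalars ℝ

@[simp]
theorem rotI_apply (u : E) : rotI u = I • u := rfl

theorem disjoint_map_rotI_of_isotropic {L : Submodule ℝ E}
    (hL : ∀ u ∈ L, ∀ v ∈ L, (⟪u, v⟫_ℂ).im = 0) :
    Disjoint L (L.map (rotI (E := E)).toLinearMap) := by
  rw [Submodule.disjoint_def]
  rintro _ hu ⟨w, hw, rfl⟩
  have hw0 : w = 0 := by
    have h := hL w hw _ hu
    rwa [LinearEquiv.coe_coe, rotI_apply, inner_smul_right, I_mul_im, ← RCLike.re_to_complex,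
      inner_self_eq_norm_sq, sq_eq_zero_iff, norm_eq_zero] at h
  simp [hw0]

theorem Submodule.two_mul_finrank_le_of_isotropic [FiniteDimensional ℝ E] (L : Submodule ℝ E)
    (hL : ∀ u ∈ L, ∀ v ∈ L, (⟪u, v⟫_ℂ).im = 0) :
    2 * finrank ℝ L ≤ finrank ℝ E := by
  have h := Submodule.finrank_add_finrank_le_of_disjoint (disjoint_map_rotI_of_isotropic hL)
  rwa [LinearEquiv.finrank_map_eq, ← two_mul] at h

end Isotropic

theorem stdSymp_eq_im_inner {N : ℕ} (u v : Fin N → ℂ) :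
    stdSymp N u v = (⟪WithLp.toLp 2 u, WithLp.toLp 2 v⟫_ℂ).im := by
  simp only [stdSymp, PiLp.inner_apply, RCLike.inner_apply', Complex.im_sum]

theorem finrank_le_of_injective_of_stdSymp_eq_zero {V : Type*} [AddCommGroup V] [Module ℝ V]
    {N : ℕ} {T : V →ₗ[ℝ] Fin N → ℂ} (hT : Function.Injective T)
    (hiso : ∀ v w, stdSymp N (T v) (T w) = 0) : finrank ℝ V ≤ N := by
  let S : V →ₗ[ℝ] EuclideanSpace ℂ (Fin N) := (WithLp.linearEquiv 2 ℝ (Fin N → ℂ)).symm ∘ₗ T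
  have h := Submodule.two_mul_finrank_le_of_isotropic (LinearMap.range S) <| by
    rintro _ ⟨v, rfl⟩ _ ⟨w, rfl⟩
    simpa [S, stdSymp_eq_im_inner] using hiso v w
  have hS : Function.Injective S := (WithLp.linearEquiv 2 ℝ (Fin N → ℂ)).symm.injective.comp hT
  rw [LinearMap.finrank_range_of_inj hS,
    ← Module.finrank_mul_finrank ℝ ℂ (EuclideanSpace ℂ (Fin N)), Complex.finrank_real_complex,
    finrank_euclideanSpace_fin] at h
  omega

theorem snd_fderiv_apply_eq_zero {E F : Type*} [NormedAddCommGroup E] [NormedSpace ℝ E]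
    [NormedAddCommGroup F] [NormedSpace ℝ F] {f : E → F × ℂ} {x : E}
    (hf : DifferentiableAt ℝ f x) (hre : fderiv ℝ (fun y => (f y).2.re) x = 0)
    (him : fderiv ℝ (fun y => (f y).2.im) x = 0) (v : E) : (fderiv ℝ f x v).2 = 0 := by
  have hcomp (L : ℂ →L[ℝ] ℝ) : fderiv ℝ (fun y => L (f y).2) x v = L (fderiv ℝ f x v).2 := by
    have h : HasFDerivAt (fun y => L (f y).2) (L ∘L .snd ℝ F ℂ ∘L fderiv ℝ f x) x :=
      L.hasFDerivAt.comp x hf.hasFDerivAt.snd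
    rw [h.fderiv]
    rfl
  apply Complex.ext
  · simpa [hre] using (hcomp reCLM).symm
  · simpa [him] using (hcomp imCLM).symm

theorem stmt13_general (n : ℕ)
    (j : (Fin (n + 1) → ℝ) → (Fin n → ℂ) × ℂ)
    (x : Fin (n + 1) → ℝ)
    (hinj : Function.Injective (fderiv ℝ j x))
    (hlag : ∀ v w : Fin (n + 1) → ℝ, sympPC n (fderiv ℝ j x v) (fderiv ℝ j x w) = 0) :
    ¬ (fderiv ℝ (fun y => ((j y).2).re) x = 0 ∧ fderiv ℝ (fun y => ((j y).2).im) x = 0) := by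
  rintro ⟨hre, him⟩
  have hsnd := snd_fderiv_apply_eq_zero (differentiableAt_of_fderiv_injective hinj) hre him
  let T := (ContinuousLinearMap.fst ℝ (Fin n → ℂ) ℂ ∘L fderiv ℝ j x).toLinearMap
  have hT : Function.Injective T := fun v w h =>
    hinj (Prod.ext h ((hsnd v).trans (hsnd w).symm))
  have h := finrank_le_of_injective_of_stdSymp_eq_zero hT fun v w => by
    simpa [T, sympPC, hsnd] using hlag v w
  rw [Module.finrank_fin_fun] at h
  omega

/-- A point of a Lagrangian cobordism cannot be a critical point of both the real and the
imaginary projections to the cobordism factor `ℂ`: if the image of `Dj_x` is a Lagrangian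
subspace of `ℂ^{n+1}`, then `D(Re ∘ pr₂ ∘ j)_x` and `D(Im ∘ pr₂ ∘ j)_x` do not both vanish. -/
theorem stmt13 (n : ℕ) (U : Set (Fin (n + 1) → ℝ)) (hU : IsOpen U)
    (j : (Fin (n + 1) → ℝ) → (Fin n → ℂ) × ℂ) (hj : ContDiffOn ℝ (⊤ : ℕ∞) j U)
    (x : Fin (n + 1) → ℝ) (hx : x ∈ U)
    (hinj : Function.Injective (fderiv ℝ j x))
    (hlag : ∀ v w : Fin (n + 1) → ℝ, sympPC n (fderiv ℝ j x v) (fderiv ℝ j x w) = 0) :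
    ¬ (fderiv ℝ (fun y => ((j y).2).re) x = 0 ∧ fderiv ℝ (fun y => ((j y).2).im) x = 0) :=
  stmt13_general n j x hinj hlag
end
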